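/- Let W be an algebraic Weyl curvature tensor on a Euclidean vector space V of dimension n ≥ 4. An endomorphism h belongs to the Lie algebra g_W of the symmetry group of W (i.e., W(hx,y,z,u) + W(x,hy,z,u) + W(x,y,hz,u) + W(x,y,z,hu) = 0 for all x,y,z,u) if and only if W(hF + Fh*) = −W(F)h − h*W(F) for all skew-symmetric endomorphisms F of V. -/
import Mathlib


/- Common setup: algebraic Weyl curvature tensors on a Euclidean vector space. -/

open scoped RealInnerProductSpace
open Finset

/-- A curvature-type 4-linear tensor on `V`. -/
abbrev Tensor4 (V : Type*) [NormedAddCommGroup V] [InnerProductSpace ℝ V] : Type _ :=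
  V →ₗ[ℝ] V →ₗ[ℝ] V →ₗ[ℝ] V →ₗ[ℝ] ℝ

variable {V : Type*} [NormedAddCommGroup V] [InnerProductSpace ℝ V] [FiniteDimensional ℝ V]

/-- `W` is an algebraic Weyl curvature tensor: it has the symmetries of a curvature
tensor, satisfies the first Bianchi identity, and is totally trace-free. -/
structure IsWeylTensor (W : Tensor4 V) : Prop where
  antisym₁ : ∀ x y z u, W x y z u = - W y x z u
  antisym₂ : ∀ x y z u, W x y z u = - W x y u z
  pair_symm : ∀ x y z u, W x y z u = W z u x y
  bianchi : ∀ x y z u, W x y z u + W y z x u + W z x y u = 0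
  trace_free : ∀ (b : OrthonormalBasis (Fin (Module.finrank ℝ V)) ℝ V) (x y : V),
      ∑ i, W x (b i) y (b i) = 0

/-- The extension of `W` to endomorphisms, `W(h) = Σᵢ W(eᵢ, ·, h eᵢ, ·)`,
viewed as a bilinear form (identified with an endomorphism via the metric). -/
noncomputable def weylExt {ι : Type*} [Fintype ι]
    (W : Tensor4 V) (b : OrthonormalBasis ι ℝ V) (h : V →ₗ[ℝ] V) (v w : V) : ℝ :=
  ∑ i, W (b i) v (h (b i)) w

/-- The space `E_W`: endomorphisms `h` with `W(x,y,hz,·) + W(y,z,hx,·) + W(z,x,hy,·) = 0`. -/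
def memE (W : Tensor4 V) (h : V →ₗ[ℝ] V) : Prop :=
  ∀ x y z u, W x y (h z) u + W y z (h x) u + W z x (h y) u = 0

/-- The Lie algebra `g_W` of the symmetry group of `W`. -/
def memG (W : Tensor4 V) (h : V →ₗ[ℝ] V) : Prop :=
  ∀ x y z u, W (h x) y z u + W x (h y) z u + W x y (h z) u + W x y z (h u) = 0

/-- Skew-symmetric endomorphisms (identified with 2-forms). -/
def IsSkew (F : V →ₗ[ℝ] V) : Prop := ∀ v w, ⟪F v, w⟫ = - ⟪v, F w⟫

/-- Symmetric endomorphisms. -/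
def IsSym (F : V →ₗ[ℝ] V) : Prop := ∀ v w, ⟪F v, w⟫ = ⟪v, F w⟫

/-- The bilinear form `g(F·,·)` associated to an endomorphism `F`. -/
noncomputable def form (F : V →ₗ[ℝ] V) (v w : V) : ℝ := ⟪F v, w⟫

section Aux

variable {ι : Type*} [Fintype ι]

private lemma contract_aux (b : OrthonormalBasis ι ℝ V) (φ : V →ₗ[ℝ] ℝ) (x : V) :
    ∑ i, ⟪b i, x⟫ * φ (b i) = φ x := by
  conv_rhs => rw [← b.sum_repr' x]
  rw [map_sum]
  simp [smul_eq_mul]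

private lemma sum_adj_aux (b : OrthonormalBasis ι ℝ V)
    (B : V →ₗ[ℝ] V →ₗ[ℝ] ℝ) (A : V →ₗ[ℝ] V) :
    ∑ i, B (A (b i)) (b i) = ∑ i, B (b i) (LinearMap.adjoint A (b i)) := by
  have L : ∀ i, B (A (b i)) (b i) = ∑ j, ⟪b j, A (b i)⟫ * B (b j) (b i) := by
    intro i
    have := contract_aux b (B.flip (b i)) (A (b i))
    simp only [LinearMap.flip_apply] at this
    exact this.symm
  have R : ∀ i, B (b i) (LinearMap.adjoint A (b i))
      = ∑ j, ⟪b j, LinearMap.adjoint A (b i)⟫ * B (b i) (b j) := by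
    intro i
    rw [← contract_aux b (B (b i)) (LinearMap.adjoint A (b i))]
  simp only [L, R]
  rw [Finset.sum_comm]
  refine Finset.sum_congr rfl fun i _ => Finset.sum_congr rfl fun j _ => ?_
  rw [LinearMap.adjoint_inner_right, real_inner_comm (b i) (A (b j))]

/-- The wedge `x ∧ y` as a skew endomorphism. -/
noncomputable def wedgeEndo (x y : V) : V →ₗ[ℝ] V where
  toFun z := ⟪x, z⟫ • y - ⟪y, z⟫ • x
  map_add' a c := by simp [inner_add_right, add_smul]; abel
  map_smul' r a := by simp [inner_smul_right, mul_smul, smul_sub]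

private lemma wedgeEndo_skew (x y : V) : IsSkew (wedgeEndo x y) := by
  intro v w
  simp only [wedgeEndo, LinearMap.coe_mk, AddHom.coe_mk, inner_sub_left, inner_sub_right,
    real_inner_smul_left, real_inner_smul_right]
  rw [real_inner_comm v y, real_inner_comm v x]
  ring

private lemma sum_wedge_aux (b : OrthonormalBasis ι ℝ V)
    (B : V →ₗ[ℝ] V →ₗ[ℝ] ℝ) (x y : V) :
    ∑ i, B (b i) (wedgeEndo x y (b i)) = B x y - B y x := by
  have key : ∀ i, B (b i) (wedgeEndo x y (b i))
      = ⟪b i, x⟫ * (B.flip y) (b i) - ⟪b i, y⟫ * (B.flip x) (b i) := by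
    intro i
    simp only [wedgeEndo, LinearMap.coe_mk, AddHom.coe_mk, map_sub, map_smul, smul_eq_mul,
      LinearMap.flip_apply]
    rw [real_inner_comm x (b i), real_inner_comm y (b i)]
  simp only [key]
  rw [Finset.sum_sub_distrib, contract_aux, contract_aux]
  simp [LinearMap.flip_apply]

/-- The slice `B(a,c) = W(a,v,c,w)` as a bilinear map. -/
private noncomputable def bilSlice (W : Tensor4 V) (v w : V) : V →ₗ[ℝ] V →ₗ[ℝ] ℝ :=
  LinearMap.mk₂ ℝ (fun a c => W a v c w)
    (by intros; simp) (by intros; simp) (by intros; simp) (by intros; simp)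

@[simp] private lemma bilSlice_apply (W : Tensor4 V) (v w a c : V) :
    bilSlice W v w a c = W a v c w := rfl

/-- The Lie-derivative slice `T(a,v,c,w)` as a bilinear map in `(a,c)`. -/
private noncomputable def bilT (W : Tensor4 V) (h : V →ₗ[ℝ] V) (v w : V) :
    V →ₗ[ℝ] V →ₗ[ℝ] ℝ :=
  LinearMap.mk₂ ℝ
    (fun a c => W (h a) v c w + W a (h v) c w + W a v (h c) w + W a v c (h w))
    (by intros; simp; ring) (by intros; simp; ring)
    (by intros; simp; ring) (by intros; simp; ring)

@[simp] private lemma bilT_apply (W : Tensor4 V) (h : V →ₗ[ℝ] V) (v w a c : V) :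
    bilT W h v w a c
      = W (h a) v c w + W a (h v) c w + W a v (h c) w + W a v c (h w) := rfl

end Aux

/-- `h ∈ g_W` iff `W(hF + Fh*) = −W(F)h − h*W(F)` for all skew `F`. -/
theorem stmt7 (hn : 4 ≤ Module.finrank ℝ V) (W : Tensor4 V) (hW : IsWeylTensor W)
    (b : OrthonormalBasis (Fin (Module.finrank ℝ V)) ℝ V)
    (h : V →ₗ[ℝ] V) :
    memG W h ↔
      ∀ F : V →ₗ[ℝ] V, IsSkew F → ∀ v w,
        weylExt W b (h ∘ₗ F + F ∘ₗ LinearMap.adjoint h) v w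
          = -(weylExt W b F (h v) w + weylExt W b F v (h w)) := by
  -- For any endomorphism `F`, replace the adjoint sum by moving `h` to the first slot.
  have adjeq : ∀ (F : V →ₗ[ℝ] V) (v w : V),
      ∑ i, W (b i) v (F (LinearMap.adjoint h (b i))) w
        = ∑ i, W (h (b i)) v (F (b i)) w := by
    intro F v w
    have := sum_adj_aux b ((bilSlice W v w).compl₂ F) h
    simpa [LinearMap.compl₂_apply] using this.symm
  constructor
  · intro hG F _ v w
    have key : ∑ i, (W (h (b i)) v (F (b i)) w + W (b i) (h v) (F (b i)) w
        + W (b i) v (h (F (b i))) w + W (b i) v (F (b i)) (h w)) = 0 :=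
      Finset.sum_eq_zero fun i _ => hG (b i) v (F (b i)) w
    simp only [Finset.sum_add_distrib] at key
    simp only [weylExt, LinearMap.add_apply, LinearMap.comp_apply]
    have expand : ∑ i, W (b i) v (h (F (b i)) + F (LinearMap.adjoint h (b i))) w
        = ∑ i, W (b i) v (h (F (b i))) w
          + ∑ i, W (b i) v (F (LinearMap.adjoint h (b i))) w := by
      rw [← Finset.sum_add_distrib]
      exact Finset.sum_congr rfl fun i _ => by simp
    rw [expand, adjeq F v w]
    linarith [key]
  · intro hyp
    -- The Lie derivative of `W` along `h`.
    set T : V → V → V → V → ℝ := fun a b c d =>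
      W (h a) b c d + W a (h b) c d + W a b (h c) d + W a b c (h d) with hT
    -- inherited symmetries
    have an2T : ∀ a b c d, T a b c d = -T a b d c := by
      intro a b c d
      simp only [hT]
      rw [hW.antisym₂ (h a) b c d, hW.antisym₂ a (h b) c d, hW.antisym₂ a b (h c) d,
        hW.antisym₂ a b c (h d)]
      ring
    have pairT : ∀ a b c d, T a b c d = T c d a b := by
      intro a b c d
      simp only [hT]
      rw [hW.pair_symm (h a) b c d, hW.pair_symm a (h b) c d, hW.pair_symm a b (h c) d,
        hW.pair_symm a b c (h d)]
      ring
    have bianchiT : ∀ a b c d, T a b c d + T b c a d + T c a b d = 0 := by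
      intro a b c d
      simp only [hT]
      linarith [hW.bianchi (h a) b c d, hW.bianchi a (h b) c d, hW.bianchi (h c) a b d,
        hW.bianchi a b c (h d)]
    -- the traced condition: for all skew F, ∑ᵢ T(eᵢ, v, F eᵢ, w) = 0
    have traced : ∀ (F : V →ₗ[ℝ] V), IsSkew F → ∀ v w,
        ∑ i, bilT W h v w (b i) (F (b i)) = 0 := by
      intro F hF v w
      have H := hyp F hF v w
      simp only [weylExt, LinearMap.add_apply, LinearMap.comp_apply] at H
      have expand : ∑ i, W (b i) v (h (F (b i)) + F (LinearMap.adjoint h (b i))) w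
          = ∑ i, W (b i) v (h (F (b i))) w
            + ∑ i, W (b i) v (F (LinearMap.adjoint h (b i))) w := by
        rw [← Finset.sum_add_distrib]
        exact Finset.sum_congr rfl fun i _ => by simp
      rw [expand, adjeq F v w] at H
      simp only [bilT_apply, Finset.sum_add_distrib]
      linarith [H]
    -- symmetry in slots 1 and 3
    have sym13T : ∀ a v c w, T a v c w = T c v a w := by
      intro a v c w
      have h0 := traced (wedgeEndo a c) (wedgeEndo_skew a c) v w
      rw [sum_wedge_aux b (bilT W h v w) a c] at h0
      simp only [bilT_apply] at h0
      simp only [hT]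
      linarith [h0]
    -- pure algebra: the four symmetries force T = 0
    intro x y z u
    have r1 : ∀ a b c d, T a b c d = -T a c d b := by
      intro a b c d
      rw [an2T a b c d, sym13T a b d c, pairT d b a c]
    have r2 : ∀ a b c d, T a b c d = T a d b c := by
      intro a b c d
      rw [r1 a b c d, r1 a c d b]; ring
    have e1 : T y z x u = T x u y z := pairT y z x u
    have e2 : T z x y u = T x z u y := by
      rw [pairT z x y u, an2T y u z x, pairT y u x z, an2T x z y u]; ring
    have hb := bianchiT x y z u
    rw [e1, e2] at hb
    have hz : T x y z u = 0 := by linarith [hb, r1 x y z u, r2 x y z u]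
    simpa [hT] using hz
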